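/- In the ADMM setting, define e₁^k = x₁^k - x₁*, e₂^k = x₂^k - x₂*, e_y^k = y^k - y*, Ψ_k = (1/(τρ))‖e_y^k‖² + ρ‖A₂e₂^k‖², and Φ_k = Ψ_k + max(1-τ, 1-τ⁻¹)ρ‖A₁e₁^k + A₂e₂^k‖². Then for every k ≥ 1: Φ_k - Φ_{k+1} ≥ min(τ, 1+τ-τ²)ρ‖A₂(x₂^k - x₂^{k+1})‖² + min(1, 1+τ⁻¹-τ)ρ‖A₁e₁^{k+1} + A₂e₂^{k+1}‖². -/

import Mathlib

open Filter Topology Set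
open scoped RealInnerProductSpace

/-- The subdifferential of convex analysis: the set of global lower-bounding slopes. -/
def SubderivAt {E : Type*} [NormedAddCommGroup E] [InnerProductSpace ℝ E]
    (f : E → ℝ) (x : E) : Set E :=
  {g : E | ∀ y, f x + ⟪g, y - x⟫ ≤ f y}

variable {E₁ : Type*} [NormedAddCommGroup E₁] [InnerProductSpace ℝ E₁] [FiniteDimensional ℝ E₁]
variable {E₂ : Type*} [NormedAddCommGroup E₂] [InnerProductSpace ℝ E₂] [FiniteDimensional ℝ E₂]
variable {F : Type*} [NormedAddCommGroup F] [InnerProductSpace ℝ F] [FiniteDimensional ℝ F]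

/-- The augmented Lagrangian function
`L_ρ(x₁, x₂, y) = f₁ x₁ + f₂ x₂ + ⟨y, A₁x₁ + A₂x₂ - b⟩ + (ρ/2)‖A₁x₁ + A₂x₂ - b‖²`. -/
noncomputable def Augmented_Lagrangian_Function (f₁ : E₁ → ℝ) (f₂ : E₂ → ℝ)
    (A₁ : E₁ →L[ℝ] F) (A₂ : E₂ →L[ℝ] F) (b : F) (ρ : ℝ) (x₁ : E₁) (x₂ : E₂) (y : F) : ℝ :=
  f₁ x₁ + f₂ x₂ + ⟪y, A₁ x₁ + A₂ x₂ - b⟫ + ρ / 2 * ‖A₁ x₁ + A₂ x₂ - b‖ ^ 2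

/-- The error measure
`Φ_k = (1/(τρ))‖e_y^k‖² + ρ‖A₂e₂^k‖² + max(1-τ, 1-τ⁻¹)ρ‖A₁e₁^k + A₂e₂^k‖²`,
where `e₁^k = x₁^k - x₁*`, `e₂^k = x₂^k - x₂*`, `e_y^k = y^k - y*`. -/
noncomputable def Φ (A₁ : E₁ →L[ℝ] F) (A₂ : E₂ →L[ℝ] F) (ρ τ : ℝ)
    (x₁ : ℕ → E₁) (x₂ : ℕ → E₂) (y : ℕ → F) (x₁s : E₁) (x₂s : E₂) (ys : F) (k : ℕ) : ℝ :=
  1 / (τ * ρ) * ‖y k - ys‖ ^ 2 + ρ * ‖A₂ (x₂ k - x₂s)‖ ^ 2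
    + max (1 - τ) (1 - τ⁻¹) * ρ * ‖A₁ (x₁ k - x₁s) + A₂ (x₂ k - x₂s)‖ ^ 2

/-- If `x` minimizes `f + Q` where `Q a = ⟪y0, A a + c⟫ + ρ/2 ‖A a + c‖²`, then minus the
gradient of `Q` at `x` is a subgradient of `f` at `x`. -/
lemma subgrad_of_min_quad {E G : Type*} [NormedAddCommGroup E] [InnerProductSpace ℝ E]
    [NormedAddCommGroup G] [InnerProductSpace ℝ G]
    (f : E → ℝ) (cf : ConvexOn ℝ Set.univ f) (A : E →L[ℝ] G) (y0 c : G) (ρ : ℝ) (hρ : 0 < ρ)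
    (x : E)
    (hmin : ∀ z : E, f x + (⟪y0, A x + c⟫ + ρ/2 * ‖A x + c‖^2)
      ≤ f z + (⟪y0, A z + c⟫ + ρ/2 * ‖A z + c‖^2)) :
    ∀ z : E, f x ≤ f z + ⟪y0 + ρ • (A x + c), A (z - x)⟫ := by
  intro z
  set d : E := z - x with hd
  set g : ℝ := ⟪y0 + ρ • (A x + c), A d⟫ with hg
  set C : ℝ := ρ/2 * ‖A d‖^2 with hC
  have hC0 : 0 ≤ C := by positivity
  have key : ∀ t : ℝ, 0 < t → t ≤ 1 → f x ≤ f z + g + t * C := by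
    intro t ht0 ht1
    have hxz : x + t • d = (1 - t) • x + t • z := by
      rw [hd]; module
    have hconv : f (x + t • d) ≤ (1 - t) * f x + t * f z := by
      rw [hxz]
      exact cf.2 (mem_univ x) (mem_univ z) (by linarith) (le_of_lt ht0) (by ring)
    have hquad : (⟪y0, A (x + t • d) + c⟫ + ρ/2 * ‖A (x + t • d) + c‖^2)
        = (⟪y0, A x + c⟫ + ρ/2 * ‖A x + c‖^2) + t * g + t^2 * C := by
      have hA : A (x + t • d) + c = (A x + c) + t • (A d) := by
        rw [map_add, map_smul]; abel
      rw [hA, hg, hC]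
      simp only [inner_add_right, inner_add_left, real_inner_smul_right, real_inner_smul_left,
        norm_add_sq_real, norm_smul, Real.norm_eq_abs]
      rw [abs_of_pos ht0]
      ring
    have h1 := hmin (x + t • d)
    rw [hquad] at h1
    have h2 : t * f x ≤ t * f z + t * g + t^2 * C := by nlinarith
    have h3 : f x ≤ f z + g + t * C := by
      have := mul_le_mul_of_nonneg_left h2 (le_of_lt (inv_pos.mpr ht0))
      calc f x = t⁻¹ * (t * f x) := by field_simp
        _ ≤ t⁻¹ * (t * f z + t * g + t^2 * C) := this
        _ = f z + g + t * C := by field_simp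
    exact h3
  have : f x ≤ f z + g := by
    by_contra h
    push_neg at h
    have hε : 0 < f x - (f z + g) := by linarith
    set ε := f x - (f z + g) with hεdef
    have ht : 0 < min 1 (ε / (C + 1)) := by
      apply lt_min one_pos; positivity
    have := key (min 1 (ε / (C + 1))) ht (min_le_left _ _)
    have h4 : min 1 (ε / (C + 1)) * C ≤ (ε / (C+1)) * C :=
      mul_le_mul_of_nonneg_right (min_le_right _ _) hC0
    have h5 : (ε / (C+1)) * C < ε := by
      rw [div_mul_eq_mul_div, div_lt_iff₀ (by linarith)]
      nlinarith
    linarith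
  linarith

set_option maxHeartbeats 1000000 in
/-- The key algebraic inequality behind the descent property of `Φ`. -/
lemma final_ineq {F : Type*} [NormedAddCommGroup F] [InnerProductSpace ℝ F]
    (ρ τ : ℝ) (hρ : 0 < ρ) (hτ₀ : 0 < τ)
    (ey ve1 vk p q : F)
    (I1 : ⟪ey + ρ • (ve1 + q), ve1⟫ ≤ 0)
    (I2 : ⟪ey + ρ • (ve1 + p), p⟫ ≤ 0)
    (I3 : 0 ≤ ⟪(τ * ρ) • (vk + q) + ρ • (ve1 + p) - ρ • (vk + q), q - p⟫) :
    (1 / (τ * ρ) * ‖ey‖ ^ 2 + ρ * ‖q‖ ^ 2 + max (1 - τ) (1 - τ⁻¹) * ρ * ‖vk + q‖ ^ 2)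
      - (1 / (τ * ρ) * ‖ey + (τ * ρ) • (ve1 + p)‖ ^ 2 + ρ * ‖p‖ ^ 2
          + max (1 - τ) (1 - τ⁻¹) * ρ * ‖ve1 + p‖ ^ 2)
      ≥ min τ (1 + τ - τ ^ 2) * ρ * ‖q - p‖ ^ 2
          + min 1 (1 + τ⁻¹ - τ) * ρ * ‖ve1 + p‖ ^ 2 := by
  have hτ : τ ≠ 0 := ne_of_gt hτ₀
  have hρ' : ρ ≠ 0 := ne_of_gt hρ
  -- scalar versions of the hypotheses
  have h1 : ⟪ey, ve1 + p⟫ + ρ * (‖ve1 + p‖ ^ 2 + ⟪q - p, ve1 + p⟫ - ⟪q - p, p⟫) ≤ 0 := by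
    have e : ⟪ey + ρ • (ve1 + q), ve1⟫ + ⟪ey + ρ • (ve1 + p), p⟫
        = ⟪ey, ve1 + p⟫ + ρ * (‖ve1 + p‖ ^ 2 + ⟪q - p, ve1 + p⟫ - ⟪q - p, p⟫) := by
      simp only [← real_inner_self_eq_norm_sq, inner_add_left, inner_add_right,
        inner_sub_left, inner_sub_right, real_inner_smul_left,
        real_inner_comm p ve1, real_inner_comm q ve1, real_inner_comm q p,
        real_inner_comm q vk, real_inner_comm p vk, real_inner_comm ve1 ey,
        real_inner_comm p ey, real_inner_comm q ey, real_inner_comm vk ey]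
      ring
    linarith [e ▸ add_nonpos I1 I2]
  have h3 : 0 ≤ ρ * ⟪q - p, ve1 + p⟫ + (τ - 1) * ρ * ⟪vk + q, q - p⟫ := by
    have e : ⟪(τ * ρ) • (vk + q) + ρ • (ve1 + p) - ρ • (vk + q), q - p⟫
        = ρ * ⟪q - p, ve1 + p⟫ + (τ - 1) * ρ * ⟪vk + q, q - p⟫ := by
      simp only [inner_add_left, inner_add_right, inner_sub_left, inner_sub_right,
        real_inner_smul_left, real_inner_comm p ve1, real_inner_comm q ve1,
        real_inner_comm q p, real_inner_comm q vk, real_inner_comm p vk,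
        real_inner_comm ve1 ey, real_inner_comm p ey, real_inner_comm q ey,
        real_inner_comm vk ey]
      ring
    linarith [e ▸ I3]
  have hq : ‖q‖ ^ 2 = ‖p‖ ^ 2 + 2 * ⟪q - p, p⟫ + ‖q - p‖ ^ 2 := by
    simp only [← real_inner_self_eq_norm_sq, inner_sub_left, inner_sub_right,
      real_inner_comm q p]
    ring
  have hey : ‖ey + (τ * ρ) • (ve1 + p)‖ ^ 2
      = ‖ey‖ ^ 2 + 2 * (τ * ρ) * ⟪ey, ve1 + p⟫ + (τ * ρ) ^ 2 * ‖ve1 + p‖ ^ 2 := by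
    rw [norm_add_sq_real, real_inner_smul_right, norm_smul]
    simp [Real.norm_eq_abs, mul_pow, sq_abs]
    ring
  have key : 1 / (τ * ρ) * ‖ey‖ ^ 2
      - 1 / (τ * ρ) * (‖ey‖ ^ 2 + 2 * (τ * ρ) * ⟪ey, ve1 + p⟫ + (τ * ρ) ^ 2 * ‖ve1 + p‖ ^ 2)
      = -2 * ⟪ey, ve1 + p⟫ - (τ * ρ) * ‖ve1 + p‖ ^ 2 := by
    field_simp
    ring
  have hWs : 0 ≤ ‖vk + q‖ ^ 2 + 2 * ⟪vk + q, q - p⟫ + ‖q - p‖ ^ 2 := by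
    have h0 : (0:ℝ) ≤ ‖(vk + q) + (q - p)‖ ^ 2 := by positivity
    rwa [norm_add_sq_real] at h0
  have hW2 : 0 ≤ ‖vk + q‖ ^ 2 - 2 * τ * ⟪vk + q, q - p⟫ + τ ^ 2 * ‖q - p‖ ^ 2 := by
    have h0 : (0:ℝ) ≤ ‖(vk + q) - τ • (q - p)‖ ^ 2 := by positivity
    rw [norm_sub_sq_real, real_inner_smul_right, norm_smul] at h0
    simp only [Real.norm_eq_abs, mul_pow, sq_abs] at h0
    linarith
  rw [hey, hq]
  rcases le_or_gt τ 1 with h | h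
  · -- τ ≤ 1
    have hinv : τ * τ⁻¹ = 1 := mul_inv_cancel₀ hτ
    have hτi : (1:ℝ) ≤ τ⁻¹ := (one_le_inv₀ hτ₀).mpr h
    have hτi' : τ ≤ τ⁻¹ := le_trans h hτi
    have e1 : max (1-τ) (1-τ⁻¹) = 1-τ := max_eq_left (by linarith)
    have e2 : min τ (1+τ-τ^2) = τ := min_eq_left (by nlinarith [sq_nonneg τ, mul_pos hτ₀ hτ₀])
    have e3 : min (1:ℝ) (1+τ⁻¹-τ) = 1 := min_eq_left (by linarith)
    rw [e1, e2, e3]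
    have f1 : 0 ≤ (1 - τ) * ρ * (‖vk + q‖ ^ 2 + 2 * ⟪vk + q, q - p⟫ + ‖q - p‖ ^ 2) :=
      mul_nonneg (mul_nonneg (by linarith) hρ.le) hWs
    linarith [key, h1, h3, f1]
  · -- 1 < τ
    have hinv : τ * τ⁻¹ = 1 := mul_inv_cancel₀ hτ
    have hτi : τ⁻¹ < 1 := inv_lt_one_of_one_lt₀ h
    have e1 : max (1-τ) (1-τ⁻¹) = 1-τ⁻¹ := max_eq_right (by linarith)
    have e2 : min τ (1+τ-τ^2) = 1+τ-τ^2 := min_eq_right (by nlinarith)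
    have e3 : min (1:ℝ) (1+τ⁻¹-τ) = 1+τ⁻¹-τ := min_eq_right (by linarith)
    rw [e1, e2, e3]
    have c0 : 0 ≤ (τ - 1) * ρ * τ⁻¹ :=
      mul_nonneg (mul_nonneg (by linarith) hρ.le) (inv_nonneg.mpr hτ₀.le)
    have f2 : 0 ≤ (1 - τ⁻¹) * ρ * ‖vk + q‖ ^ 2 - 2 * (τ - 1) * ρ * ⟪vk + q, q - p⟫
        + (τ ^ 2 - τ) * ρ * ‖q - p‖ ^ 2 := by
      have e : (τ - 1) * ρ * τ⁻¹
          * (‖vk + q‖ ^ 2 - 2 * τ * ⟪vk + q, q - p⟫ + τ ^ 2 * ‖q - p‖ ^ 2)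
          = (1 - τ⁻¹) * ρ * ‖vk + q‖ ^ 2 - 2 * (τ - 1) * ρ * ⟪vk + q, q - p⟫
            + (τ ^ 2 - τ) * ρ * ‖q - p‖ ^ 2 := by
        field_simp
      linarith [mul_nonneg c0 hW2, e]
    linarith [key, h1, h3, f2]

theorem Φ_isdescending
    (f₁ : E₁ → ℝ) (f₂ : E₂ → ℝ) (A₁ : E₁ →L[ℝ] F) (A₂ : E₂ →L[ℝ] F) (b : F)
    (lscf₁ : LowerSemicontinuous f₁) (lscf₂ : LowerSemicontinuous f₂)
    (cf₁ : ConvexOn ℝ Set.univ f₁) (cf₂ : ConvexOn ℝ Set.univ f₂)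
    -- a KKT pair (x₁*, x₂*, y*) of the problem
    (x₁s : E₁) (x₂s : E₂) (ys : F)
    (kkt₁ : -(ContinuousLinearMap.adjoint A₁ ys) ∈ SubderivAt f₁ x₁s)
    (kkt₂ : -(ContinuousLinearMap.adjoint A₂ ys) ∈ SubderivAt f₂ x₂s)
    (kkt₃ : A₁ x₁s + A₂ x₂s = b)
    -- the parameters and the ADMM iterates
    (ρ τ : ℝ) (hρ : 0 < ρ) (hτ₀ : 0 < τ) (hτ₁ : τ < (1 + Real.sqrt 5) / 2)
    (x₁ : ℕ → E₁) (x₂ : ℕ → E₂) (y : ℕ → F)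
    (iterx₁ : ∀ k, IsMinOn
      (fun a => Augmented_Lagrangian_Function f₁ f₂ A₁ A₂ b ρ a (x₂ k) (y k))
      Set.univ (x₁ (k + 1)))
    (uiterx₁ : ∀ k a, IsMinOn
      (fun a => Augmented_Lagrangian_Function f₁ f₂ A₁ A₂ b ρ a (x₂ k) (y k))
      Set.univ a → a = x₁ (k + 1))
    (iterx₂ : ∀ k, IsMinOn
      (fun a => Augmented_Lagrangian_Function f₁ f₂ A₁ A₂ b ρ (x₁ (k + 1)) a (y k))
      Set.univ (x₂ (k + 1)))
    (uiterx₂ : ∀ k a, IsMinOn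
      (fun a => Augmented_Lagrangian_Function f₁ f₂ A₁ A₂ b ρ (x₁ (k + 1)) a (y k))
      Set.univ a → a = x₂ (k + 1))
    (itery : ∀ k, y (k + 1) = y k + (τ * ρ) • (A₁ (x₁ (k + 1)) + A₂ (x₂ (k + 1)) - b)) :
    ∀ k : ℕ, 1 ≤ k →
      Φ A₁ A₂ ρ τ x₁ x₂ y x₁s x₂s ys k - Φ A₁ A₂ ρ τ x₁ x₂ y x₁s x₂s ys (k + 1) ≥
        min τ (1 + τ - τ ^ 2) * ρ * ‖A₂ (x₂ k - x₂ (k + 1))‖ ^ 2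
          + min 1 (1 + τ⁻¹ - τ) * ρ * ‖A₁ (x₁ (k + 1) - x₁s) + A₂ (x₂ (k + 1) - x₂s)‖ ^ 2 := by
  intro k hk
  obtain ⟨j, rfl⟩ : ∃ j, k = j + 1 := ⟨k - 1, by omega⟩
  -- the three optimality conditions in subgradient form
  have hmin1 : ∀ z : E₁, f₁ (x₁ (j+1+1))
      + (⟪y (j+1), A₁ (x₁ (j+1+1)) + (A₂ (x₂ (j+1)) - b)⟫
        + ρ/2 * ‖A₁ (x₁ (j+1+1)) + (A₂ (x₂ (j+1)) - b)‖^2)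
      ≤ f₁ z + (⟪y (j+1), A₁ z + (A₂ (x₂ (j+1)) - b)⟫
        + ρ/2 * ‖A₁ z + (A₂ (x₂ (j+1)) - b)‖^2) := by
    intro z
    have h := isMinOn_iff.mp (iterx₁ (j+1)) z (mem_univ z)
    simp only [Augmented_Lagrangian_Function, add_sub_assoc] at h
    linarith
  have S1 := subgrad_of_min_quad f₁ cf₁ A₁ (y (j+1)) (A₂ (x₂ (j+1)) - b) ρ hρ
    (x₁ (j+1+1)) hmin1
  have hmin2 : ∀ z : E₂, f₂ (x₂ (j+1+1))
      + (⟪y (j+1), A₂ (x₂ (j+1+1)) + (A₁ (x₁ (j+1+1)) - b)⟫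
        + ρ/2 * ‖A₂ (x₂ (j+1+1)) + (A₁ (x₁ (j+1+1)) - b)‖^2)
      ≤ f₂ z + (⟪y (j+1), A₂ z + (A₁ (x₁ (j+1+1)) - b)⟫
        + ρ/2 * ‖A₂ z + (A₁ (x₁ (j+1+1)) - b)‖^2) := by
    intro z
    have h := isMinOn_iff.mp (iterx₂ (j+1)) z (mem_univ z)
    simp only [Augmented_Lagrangian_Function] at h
    rw [show A₁ (x₁ (j+1+1)) + A₂ z - b = A₂ z + (A₁ (x₁ (j+1+1)) - b) from by abel,
      show A₁ (x₁ (j+1+1)) + A₂ (x₂ (j+1+1)) - b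
        = A₂ (x₂ (j+1+1)) + (A₁ (x₁ (j+1+1)) - b) from by abel] at h
    linarith
  have S2 := subgrad_of_min_quad f₂ cf₂ A₂ (y (j+1)) (A₁ (x₁ (j+1+1)) - b) ρ hρ
    (x₂ (j+1+1)) hmin2
  have hmin3 : ∀ z : E₂, f₂ (x₂ (j+1))
      + (⟪y j, A₂ (x₂ (j+1)) + (A₁ (x₁ (j+1)) - b)⟫
        + ρ/2 * ‖A₂ (x₂ (j+1)) + (A₁ (x₁ (j+1)) - b)‖^2)
      ≤ f₂ z + (⟪y j, A₂ z + (A₁ (x₁ (j+1)) - b)⟫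
        + ρ/2 * ‖A₂ z + (A₁ (x₁ (j+1)) - b)‖^2) := by
    intro z
    have h := isMinOn_iff.mp (iterx₂ j) z (mem_univ z)
    simp only [Augmented_Lagrangian_Function] at h
    rw [show A₁ (x₁ (j+1)) + A₂ z - b = A₂ z + (A₁ (x₁ (j+1)) - b) from by abel,
      show A₁ (x₁ (j+1)) + A₂ (x₂ (j+1)) - b
        = A₂ (x₂ (j+1)) + (A₁ (x₁ (j+1)) - b) from by abel] at h
    linarith
  have S3 := subgrad_of_min_quad f₂ cf₂ A₂ (y j) (A₁ (x₁ (j+1)) - b) ρ hρ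
    (x₂ (j+1)) hmin3
  -- first variational inequality
  have I1 : ⟪(y (j+1) - ys) + ρ • (A₁ (x₁ (j+1+1) - x₁s) + A₂ (x₂ (j+1) - x₂s)),
      A₁ (x₁ (j+1+1) - x₁s)⟫ ≤ 0 := by
    have hv1 : y (j+1) + ρ • (A₁ (x₁ (j+1+1)) + (A₂ (x₂ (j+1)) - b))
        = ((y (j+1) - ys) + ρ • (A₁ (x₁ (j+1+1) - x₁s) + A₂ (x₂ (j+1) - x₂s))) + ys := by
      rw [← kkt₃]; simp only [map_sub]; module
    have h1 := S1 x₁s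
    have h2 := kkt₁ (x₁ (j+1+1))
    rw [hv1, show x₁s - x₁ (j+1+1) = -(x₁ (j+1+1) - x₁s) from (neg_sub _ _).symm, map_neg,
      inner_neg_right, inner_add_left] at h1
    rw [inner_neg_left, ContinuousLinearMap.adjoint_inner_left] at h2
    linarith
  -- second variational inequality
  have I2 : ⟪(y (j+1) - ys) + ρ • (A₁ (x₁ (j+1+1) - x₁s) + A₂ (x₂ (j+1+1) - x₂s)),
      A₂ (x₂ (j+1+1) - x₂s)⟫ ≤ 0 := by
    have hv2 : y (j+1) + ρ • (A₂ (x₂ (j+1+1)) + (A₁ (x₁ (j+1+1)) - b))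
        = ((y (j+1) - ys) + ρ • (A₁ (x₁ (j+1+1) - x₁s) + A₂ (x₂ (j+1+1) - x₂s))) + ys := by
      rw [← kkt₃]; simp only [map_sub]; module
    have h1 := S2 x₂s
    have h2 := kkt₂ (x₂ (j+1+1))
    rw [hv2, show x₂s - x₂ (j+1+1) = -(x₂ (j+1+1) - x₂s) from (neg_sub _ _).symm, map_neg,
      inner_neg_right, inner_add_left] at h1
    rw [inner_neg_left, ContinuousLinearMap.adjoint_inner_left] at h2
    linarith
  -- third variational inequality (monotonicity between consecutive x₂-updates)
  have I3 : 0 ≤ ⟪(τ * ρ) • (A₁ (x₁ (j+1) - x₁s) + A₂ (x₂ (j+1) - x₂s))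
      + ρ • (A₁ (x₁ (j+1+1) - x₁s) + A₂ (x₂ (j+1+1) - x₂s))
      - ρ • (A₁ (x₁ (j+1) - x₁s) + A₂ (x₂ (j+1) - x₂s)),
      A₂ (x₂ (j+1) - x₂s) - A₂ (x₂ (j+1+1) - x₂s)⟫ := by
    have hv3 : (y (j+1) + ρ • (A₂ (x₂ (j+1+1)) + (A₁ (x₁ (j+1+1)) - b)))
        - (y j + ρ • (A₂ (x₂ (j+1)) + (A₁ (x₁ (j+1)) - b)))
        = (τ * ρ) • (A₁ (x₁ (j+1) - x₁s) + A₂ (x₂ (j+1) - x₂s))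
          + ρ • (A₁ (x₁ (j+1+1) - x₁s) + A₂ (x₂ (j+1+1) - x₂s))
          - ρ • (A₁ (x₁ (j+1) - x₁s) + A₂ (x₂ (j+1) - x₂s)) := by
      rw [itery j, ← kkt₃]; simp only [map_sub]; module
    have hD : A₂ (x₂ (j+1) - x₂ (j+1+1))
        = A₂ (x₂ (j+1) - x₂s) - A₂ (x₂ (j+1+1) - x₂s) := by
      simp only [map_sub]; abel
    have h1 := S2 (x₂ (j+1))
    have h2 := S3 (x₂ (j+1+1))
    rw [hD] at h1
    rw [show x₂ (j+1+1) - x₂ (j+1) = -(x₂ (j+1) - x₂ (j+1+1)) from (neg_sub _ _).symm,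
      map_neg, inner_neg_right, hD] at h2
    rw [← hv3, inner_sub_left]
    linarith
  have main := final_ineq ρ τ hρ hτ₀ (y (j+1) - ys) (A₁ (x₁ (j+1+1) - x₁s))
    (A₁ (x₁ (j+1) - x₁s)) (A₂ (x₂ (j+1+1) - x₂s)) (A₂ (x₂ (j+1) - x₂s)) I1 I2 I3
  have hy2 : y (j+1+1) - ys
      = (y (j+1) - ys) + (τ * ρ) • (A₁ (x₁ (j+1+1) - x₁s) + A₂ (x₂ (j+1+1) - x₂s)) := by
    rw [itery (j+1), ← kkt₃]; simp only [map_sub]; module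
  have hD : A₂ (x₂ (j+1) - x₂ (j+1+1))
      = A₂ (x₂ (j+1) - x₂s) - A₂ (x₂ (j+1+1) - x₂s) := by
    simp only [map_sub]; abel
  simp only [Φ]
  rw [hy2, hD]
  exact main
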